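/- Let d ≥ 2 be an integer and let a ∈ ℝ with |a| ≤ 1/√(2d−1). Then the function t ↦ (t − a)/(t² + 1)^{d/2} is monotone increasing on the interval [−1/√(2d−1), 1/√(2d−1)]. -/
import Mathlib


/-- **Lemma 7.2 of the paper.** For `|a| ≤ 1/√(2d-1)`, the function
`t ↦ (t - a)/(t² + 1)^{d/2}` is monotone increasing on `[-1/√(2d-1), 1/√(2d-1)]`. -/
theorem muskat_kernel_monotone (d : ℕ) (hd : 2 ≤ d) (a : ℝ)
    (ha : |a| ≤ 1 / Real.sqrt (2 * (d : ℝ) - 1)) :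
    MonotoneOn (fun t : ℝ => (t - a) / (t ^ 2 + 1) ^ ((d : ℝ) / 2))
      (Set.Icc (-(1 / Real.sqrt (2 * (d : ℝ) - 1))) (1 / Real.sqrt (2 * (d : ℝ) - 1))) := by
  set c : ℝ := (d : ℝ) / 2 with hc
  set b : ℝ := 1 / Real.sqrt (2 * (d : ℝ) - 1) with hb
  have hd1 : (2 : ℝ) ≤ (d : ℝ) := by exact_mod_cast hd
  have h2d : (0 : ℝ) < 2 * (d : ℝ) - 1 := by linarith
  have hbpos : 0 < b := by
    rw [hb]; positivity
  have hb2 : b ^ 2 * (2 * (d : ℝ) - 1) = 1 := by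
    rw [hb, div_pow, one_pow, Real.sq_sqrt h2d.le]
    field_simp
  have hder : ∀ t : ℝ, HasDerivAt (fun t : ℝ => (t - a) / (t ^ 2 + 1) ^ c)
      ((1 * (t ^ 2 + 1) ^ c - (t - a) * (2 * t * c * (t ^ 2 + 1) ^ (c - 1))) /
        ((t ^ 2 + 1) ^ c) ^ 2) t := by
    intro t
    have hpos : (0:ℝ) < t ^ 2 + 1 := by positivity
    have h1 : HasDerivAt (fun t : ℝ => t - a) 1 t := (hasDerivAt_id t).sub_const a
    have h2 : HasDerivAt (fun t : ℝ => t ^ 2 + 1) (2 * t) t := by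
      simpa using ((hasDerivAt_pow 2 t).add_const 1)
    have h3 := h2.rpow_const (p := c) (Or.inl hpos.ne')
    exact h1.div h3 (by positivity)
  have hdiff : ∀ t : ℝ, DifferentiableAt ℝ (fun t : ℝ => (t - a) / (t ^ 2 + 1) ^ c) t :=
    fun t => (hder t).differentiableAt
  apply monotoneOn_of_deriv_nonneg (convex_Icc _ _)
  · exact (Differentiable.continuous hdiff).continuousOn
  · exact fun x _ => (hdiff x).differentiableWithinAt
  · intro x hx
    rw [interior_Icc] at hx
    rw [(hder x).deriv]
    have hpos : (0:ℝ) < x ^ 2 + 1 := by positivity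
    have hfac : (0:ℝ) < (x ^ 2 + 1) ^ (c - 1) := Real.rpow_pos_of_pos hpos _
    have key : (x ^ 2 + 1) ^ c = (x ^ 2 + 1) ^ (c - 1) * (x ^ 2 + 1) := by
      rw [← Real.rpow_add_one hpos.ne' (c - 1)]; ring_nf
    have hg : 0 ≤ (x ^ 2 + 1) - 2 * c * x * (x - a) := by
      have hxb : x ^ 2 ≤ b ^ 2 := by
        exact sq_le_sq' hx.1.le hx.2.le
      have hab : a ^ 2 ≤ b ^ 2 := by
        have := sq_abs a
        nlinarith [sq_nonneg (|a| + b), abs_nonneg a]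
      have hax : -(b ^ 2) ≤ a * x := by nlinarith [sq_nonneg (a + x)]
      have h2c : 2 * c = (d : ℝ) := by rw [hc]; ring
      rw [h2c]
      nlinarith [hb2, hd1, hxb]
    have hnum : 0 ≤ 1 * (x ^ 2 + 1) ^ c - (x - a) * (2 * x * c * (x ^ 2 + 1) ^ (c - 1)) := by
      have : 1 * (x ^ 2 + 1) ^ c - (x - a) * (2 * x * c * (x ^ 2 + 1) ^ (c - 1)) =
          (x ^ 2 + 1) ^ (c - 1) * ((x ^ 2 + 1) - 2 * c * x * (x - a)) := by
        rw [key]; ring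
      rw [this]
      exact mul_nonneg hfac.le hg
    positivity
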